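/- arXiv:math/0309295 — 3 statements merged into one kernel-verified Lean document; each statement's English description precedes it below -/
import Mathlib

section
/- Suppose f is strictly decreasing and continuous with f(x) → +∞ as x → 0+ and f(x) → -∞ as x → ∞ (radially unbounded potential), and g is strictly increasing and continuous. Then every solution of q̇ = p, ṗ = f(e^q x*) - g(p + μ₀) starting at any initial condition is bounded: it remains in the sublevel set {V ≤ V(q(0), p(0))} of the energy V for all t ≥ 0. -/
/-!
Along a solution the energy `V = p²/2 + ∫₀^q φ`, with `φ(s) = g μ₀ - f(e^s x*)`, has derivative
`-p (g(p + μ₀) - g μ₀)`, which is nonpositive because `g` is monotone: the friction term only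
dissipates energy.
-/

open Set

section DampedOscillator

variable {φ D q p : ℝ → ℝ} {a : ℝ}

theorem hasDerivAt_energy (hφ : Continuous φ) {t : ℝ} (hq : HasDerivAt q (p t) t)
    (hp : HasDerivAt p (-φ (q t) - D (p t)) t) :
    HasDerivAt (fun t => p t ^ 2 / 2 + ∫ s in a..q t, φ s) (-(p t * D (p t))) t := by
  have hkin := (hp.fun_pow 2).div_const 2
  have hpot := ((hφ.integral_hasStrictDerivAt a (q t)).hasDerivAt).comp t hq
  exact (hkin.add hpot).congr_deriv (by push_cast; ring)

theorem antitoneOn_energy (hφ : Continuous φ) (hD : ∀ v, 0 ≤ v * D v)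
    (hq : ∀ t ≥ 0, HasDerivAt q (p t) t) (hp : ∀ t ≥ 0, HasDerivAt p (-φ (q t) - D (p t)) t) :
    AntitoneOn (fun t => p t ^ 2 / 2 + ∫ s in a..q t, φ s) (Ici 0) := by
  have hderiv : ∀ t ∈ Ici (0 : ℝ), HasDerivAt (fun t => p t ^ 2 / 2 + ∫ s in a..q t, φ s)
      (-(p t * D (p t))) t := fun t ht => hasDerivAt_energy hφ (hq t ht) (hp t ht)
  refine antitoneOn_of_hasDerivWithinAt_nonpos (convex_Ici 0)
    (fun t ht => (hderiv t ht).continuousAt.continuousWithinAt) (fun t ht => ?_)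
    (fun t _ => neg_nonpos.mpr (hD (p t)))
  rw [interior_Ici] at ht
  exact (hderiv t (mem_Ici.mpr ht.le)).hasDerivWithinAt

end DampedOscillator

theorem Monotone.mul_sub_add_nonneg {g : ℝ → ℝ} (hg : Monotone g) (c v : ℝ) :
    0 ≤ v * (g (v + c) - g c) := by
  calc 0 ≤ (g c - g (v + c)) * (id c - id (v + c)) :=
        (hg.monovary monotone_id).sub_mul_sub_nonneg (v + c) c
    _ = v * (g (v + c) - g c) := by simp only [id]; ring

theorem stmt_4_general (μ₀ : ℝ) (xs : ℝ) (hxs : 0 < xs) (f g : ℝ → ℝ)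
    (hf : ContinuousOn f (Set.Ioi 0))
    (hgmono : StrictMono g)
    (V : ℝ → ℝ → ℝ)
    (hV : ∀ a b, V a b = b ^ 2 / 2 + ∫ s in (0:ℝ)..a, (g μ₀ - f (Real.exp s * xs)))
    (q p : ℝ → ℝ)
    (hq : ∀ t ≥ (0:ℝ), HasDerivAt q (p t) t)
    (hp : ∀ t ≥ (0:ℝ), HasDerivAt p (f (Real.exp (q t) * xs) - g (p t + μ₀)) t) :
    ∀ t ≥ (0:ℝ), V (q t) (p t) ≤ V (q 0) (p 0) := by
  have hφ : Continuous fun s => g μ₀ - f (Real.exp s * xs) :=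
    continuous_const.sub <| hf.comp_continuous (by fun_prop) fun s => mul_pos (Real.exp_pos s) hxs
  have hp' : ∀ t ≥ (0:ℝ), HasDerivAt p
      (-(g μ₀ - f (Real.exp (q t) * xs)) - (g (p t + μ₀) - g μ₀)) t := fun t ht =>
    (hp t ht).congr_deriv (by ring)
  intro t ht
  simpa only [hV] using antitoneOn_energy hφ (hgmono.monotone.mul_sub_add_nonneg μ₀) hq hp'
    self_mem_Ici ht ht

theorem stmt_4 (μ₀ : ℝ) (xs : ℝ) (hxs : 0 < xs) (f g : ℝ → ℝ)
    (hf : ContinuousOn f (Set.Ioi 0)) (hfanti : StrictAntiOn f (Set.Ioi 0))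
    (hf0 : Filter.Tendsto f (nhdsWithin 0 (Set.Ioi 0)) Filter.atTop)
    (hfinf : Filter.Tendsto f Filter.atTop Filter.atBot)
    (hg : Continuous g) (hgmono : StrictMono g)
    (hcomp : f xs = g μ₀)
    (V : ℝ → ℝ → ℝ)
    (hV : ∀ a b, V a b = b ^ 2 / 2 + ∫ s in (0:ℝ)..a, (g μ₀ - f (Real.exp s * xs)))
    (q p : ℝ → ℝ)
    (hq : ∀ t ≥ (0:ℝ), HasDerivAt q (p t) t)
    (hp : ∀ t ≥ (0:ℝ), HasDerivAt p (f (Real.exp (q t) * xs) - g (p t + μ₀)) t) :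
    ∀ t ≥ (0:ℝ), V (q t) (p t) ≤ V (q 0) (p 0) :=
  stmt_4_general μ₀ xs hxs f g hf hgmono V hV q p hq hp
end

section
/- For the mass-spring-damper system q̈ + g(q̇ + μ₀) - g(μ₀) = f(e^q x*) - f(x*) with f strictly decreasing, g strictly increasing, the only solution along which the energy V is constant is the equilibrium solution (q,p) ≡ (0,0). (LaSalle invariance: the largest invariant set in {V̇ = 0} is the origin.) -/
/-!
Along a solution the energy dissipates at rate `dV/dt = p (g μ₀ - g (p + μ₀))`, which is
negative unless `p = 0` because `g` is strictly increasing. Constant energy therefore forces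
`p ≡ 0`; then `p' = 0` gives `f (e^q x*) = g μ₀ = f x*`, and injectivity of `f` gives `q ≡ 0`.
-/

open Real Set

lemma HasDerivAt.eq_zero_of_forall_eq {u : ℝ → ℝ} {u' c t : ℝ} (hu : HasDerivAt u u' t)
    (hc : ∀ s, u s = c) : u' = 0 := by
  obtain rfl : u = fun _ => c := funext hc
  exact hu.unique (hasDerivAt_const t c)

lemma hasDerivAt_kinetic_add_potential {G q p : ℝ → ℝ} (hG : Continuous G) {t p' : ℝ}
    (hq : HasDerivAt q (p t) t) (hp : HasDerivAt p p' t) :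
    HasDerivAt (fun t => p t ^ 2 / 2 + ∫ s in (0:ℝ)..q t, G s) (p t * (p' + G (q t))) t := by
  have hkin : HasDerivAt (fun t => p t ^ 2 / 2) (2 * p t ^ 1 * p' / 2) t :=
    (hp.pow 2).div_const 2
  have hpot : HasDerivAt (fun t => ∫ s in (0:ℝ)..q t, G s) (G (q t) * p t) t :=
    (hG.integral_hasStrictDerivAt 0 (q t)).hasDerivAt.comp t hq
  exact (hkin.add hpot).congr_deriv (by ring)

lemma StrictMono.eq_zero_of_mul_sub_eq_zero {g : ℝ → ℝ} (hg : StrictMono g) {x c : ℝ}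
    (h : x * (g c - g (x + c)) = 0) : x = 0 := by
  by_contra hx
  rcases lt_or_gt_of_ne hx with hneg | hpos
  · have : g (x + c) < g c := hg (by linarith)
    nlinarith
  · have : g c < g (x + c) := hg (by linarith)
    nlinarith

lemma eq_zero_of_apply_exp_mul_eq {f : ℝ → ℝ} (hf : InjOn f (Ioi 0)) {xs a : ℝ} (hxs : 0 < xs)
    (h : f (exp a * xs) = f xs) : a = 0 := by
  have hmul : exp a * xs = 1 * xs :=
    (hf (mul_pos (exp_pos a) hxs) hxs h).trans (one_mul xs).symm
  exact exp_eq_one_iff a |>.mp (mul_right_cancel₀ hxs.ne' hmul)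

theorem stmt_12_general (μ₀ : ℝ) (xs : ℝ) (hxs : 0 < xs) (f g : ℝ → ℝ)
    (hf : ContinuousOn f (Set.Ioi 0)) (hfanti : StrictAntiOn f (Set.Ioi 0))
    (hgmono : StrictMono g)
    (hcomp : f xs = g μ₀)
    (V : ℝ → ℝ → ℝ)
    (hV : ∀ a b, V a b = b ^ 2 / 2 + ∫ s in (0:ℝ)..a, (g μ₀ - f (Real.exp s * xs)))
    (q p : ℝ → ℝ)
    (hq : ∀ t, HasDerivAt q (p t) t)
    (hp : ∀ t, HasDerivAt p (f (Real.exp (q t) * xs) - g (p t + μ₀)) t)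
    (hVconst : ∀ t, V (q t) (p t) = V (q 0) (p 0)) :
    ∀ t, q t = 0 ∧ p t = 0 := by
  have hG : Continuous fun s => g μ₀ - f (exp s * xs) :=
    continuous_const.sub <| hf.comp_continuous (by fun_prop) fun s => mul_pos (exp_pos s) hxs
  have hp0 (t : ℝ) : p t = 0 := by
    have hdV := hasDerivAt_kinetic_add_potential hG (hq t) (hp t)
    have hdissip := hdV.eq_zero_of_forall_eq fun s => (hV _ _).symm.trans (hVconst s)
    exact hgmono.eq_zero_of_mul_sub_eq_zero (c := μ₀) (by rw [← hdissip]; ring)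
  intro t
  have hforce := (hp t).eq_zero_of_forall_eq hp0
  rw [hp0 t, zero_add, ← hcomp, sub_eq_zero] at hforce
  exact ⟨eq_zero_of_apply_exp_mul_eq hfanti.injOn hxs hforce, hp0 t⟩

theorem stmt_12 (μ₀ : ℝ) (xs : ℝ) (hxs : 0 < xs) (f g : ℝ → ℝ)
    (hf : ContinuousOn f (Set.Ioi 0)) (hfanti : StrictAntiOn f (Set.Ioi 0))
    (hg : Continuous g) (hgmono : StrictMono g)
    (hcomp : f xs = g μ₀)
    (V : ℝ → ℝ → ℝ)
    (hV : ∀ a b, V a b = b ^ 2 / 2 + ∫ s in (0:ℝ)..a, (g μ₀ - f (Real.exp s * xs)))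
    (q p : ℝ → ℝ)
    (hq : ∀ t, HasDerivAt q (p t) t)
    (hp : ∀ t, HasDerivAt p (f (Real.exp (q t) * xs) - g (p t + μ₀)) t)
    (hVconst : ∀ t, V (q t) (p t) = V (q 0) (p 0)) :
    ∀ t, q t = 0 ∧ p t = 0 :=
  stmt_12_general μ₀ xs hxs f g hf hfanti hgmono hcomp V hV q p hq hp hVconst
end

section
/- Suppose f, g are continuous, f strictly decreasing with lim_{x→0+} f(x) = +∞, lim_{x→+∞} f(x) = -∞, g strictly increasing, and f(x*) = g(μ₀). Then every maximal solution (x(t), μ(t)) with x(0) > 0 of ẋ = (μ-μ₀)x, μ̇ = f(x) - g(μ) exists for all t ≥ 0, remains in (0,∞) × ℝ, and converges to (x*, μ₀) as t → ∞. -/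
open Set Filter MeasureTheory Real

private lemma antiOn_of_hasDerivAt {φ φ' : ℝ → ℝ} {s : Set ℝ} (hs : Convex ℝ s)
    (hd : ∀ t ∈ s, HasDerivAt φ (φ' t) t) (h0 : ∀ t ∈ s, φ' t ≤ 0) :
    AntitoneOn φ s := by
  apply antitoneOn_of_deriv_nonpos hs
    (fun t ht => (hd t ht).continuousAt.continuousWithinAt)
    (fun t ht => ((hd t (interior_subset ht)).differentiableAt).differentiableWithinAt)
  intro t ht
  rw [(hd t (interior_subset ht)).deriv]
  exact h0 t (interior_subset ht)

private lemma monoOn_of_hasDerivAt {φ φ' : ℝ → ℝ} {s : Set ℝ} (hs : Convex ℝ s)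
    (hd : ∀ t ∈ s, HasDerivAt φ (φ' t) t) (h0 : ∀ t ∈ s, 0 ≤ φ' t) :
    MonotoneOn φ s := by
  apply monotoneOn_of_deriv_nonneg hs
    (fun t ht => (hd t ht).continuousAt.continuousWithinAt)
    (fun t ht => ((hd t (interior_subset ht)).differentiableAt).differentiableWithinAt)
  intro t ht
  rw [(hd t (interior_subset ht)).deriv]
  exact h0 t (interior_subset ht)

private lemma strictMonoOn_of_hasDerivAt' {φ φ' : ℝ → ℝ} {s : Set ℝ} (hs : Convex ℝ s)
    (hd : ∀ t ∈ s, HasDerivAt φ (φ' t) t) (h0 : ∀ t ∈ interior s, 0 < φ' t) :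
    StrictMonoOn φ s := by
  apply strictMonoOn_of_deriv_pos hs
    (fun t ht => (hd t ht).continuousAt.continuousWithinAt)
  intro t ht
  rw [(hd t (interior_subset ht)).deriv]
  exact h0 t ht

private lemma strictAntiOn_of_hasDerivAt' {φ φ' : ℝ → ℝ} {s : Set ℝ} (hs : Convex ℝ s)
    (hd : ∀ t ∈ s, HasDerivAt φ (φ' t) t) (h0 : ∀ t ∈ interior s, φ' t < 0) :
    StrictAntiOn φ s := by
  apply strictAntiOn_of_deriv_neg hs
    (fun t ht => (hd t ht).continuousAt.continuousWithinAt)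
  intro t ht
  rw [(hd t (interior_subset ht)).deriv]
  exact h0 t ht

private lemma xpos_aux (μ₀ : ℝ) (x μ : ℝ → ℝ) (hx0 : 0 < x 0)
    (hx : ∀ t ≥ (0:ℝ), HasDerivAt x ((μ t - μ₀) * x t) t)
    (hμc : ∀ t ≥ (0:ℝ), ContinuousAt μ t) :
    ∀ t ≥ (0:ℝ), 0 < x t := by
  by_contra h
  push_neg at h
  obtain ⟨t₁, ht₁, hx₁⟩ := h
  have hxc : ContinuousOn x (Icc 0 t₁) :=
    fun t ht => ((hx t ht.1).continuousAt).continuousWithinAt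
  have hiv : (0:ℝ) ∈ x '' (Icc 0 t₁) := by
    apply intermediate_value_Icc' ht₁ hxc
    exact ⟨hx₁, hx0.le⟩
  set Z : Set ℝ := Icc 0 t₁ ∩ x ⁻¹' {0} with hZ
  have hZne : Z.Nonempty := by
    obtain ⟨u, hu, hxu⟩ := hiv
    exact ⟨u, hu, by simp [hxu]⟩
  have hZclosed : IsClosed Z :=
    hxc.preimage_isClosed_of_isClosed isClosed_Icc isClosed_singleton
  have hZbdd : BddBelow Z := ⟨0, fun u hu => hu.1.1⟩
  set T := sInf Z with hT
  have hTZ : T ∈ Z := hZclosed.csInf_mem hZne hZbdd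
  have hxT : x T = 0 := hTZ.2
  have hT0 : 0 ≤ T := hTZ.1.1
  have hTpos : 0 < T := by
    rcases hT0.lt_or_eq with h | h
    · exact h
    · exact absurd hxT (by rw [← h]; exact hx0.ne')
  have hxpos' : ∀ t ∈ Ico 0 T, 0 < x t := by
    intro t ht
    by_contra hle
    push_neg at hle
    have htle : t ≤ t₁ := le_trans ht.2.le hTZ.1.2
    have : (0:ℝ) ∈ x '' (Icc 0 t) := by
      apply intermediate_value_Icc' ht.1 (hxc.mono (Icc_subset_Icc le_rfl htle))
      exact ⟨hle, hx0.le⟩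
    obtain ⟨u, hu, hxu⟩ := this
    have huZ : u ∈ Z := ⟨⟨hu.1, le_trans hu.2 htle⟩, by simp [hxu]⟩
    have : T ≤ u := csInf_le hZbdd huZ
    exact absurd (lt_of_le_of_lt hu.2 ht.2) (not_lt.mpr this)
  obtain ⟨M, hM⟩ : ∃ M, ∀ t ∈ Icc 0 T, ‖μ t - μ₀‖ ≤ M := by
    apply IsCompact.exists_bound_of_continuousOn isCompact_Icc
    exact fun t ht => ((hμc t ht.1).sub continuousAt_const).continuousWithinAt
  have hM0 : 0 ≤ M := le_trans (norm_nonneg _) (hM 0 ⟨le_rfl, hT0⟩)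
  have hlog : ∀ t ∈ Ico 0 T, ‖Real.log (x t) - Real.log (x 0)‖ ≤ M * ‖t - 0‖ := by
    intro t ht
    apply Convex.norm_image_sub_le_of_norm_hasDerivWithin_le
      (f' := fun u => μ u - μ₀) ?_ ?_ (convex_Ico 0 T) ⟨le_rfl, hTpos⟩ ht
    · intro u hu
      have hd := (hx u hu.1).log (hxpos' u hu).ne'
      rw [mul_div_cancel_right₀ _ (hxpos' u hu).ne'] at hd
      exact hd.hasDerivWithinAt
    · exact fun u hu => hM u ⟨hu.1, hu.2.le⟩
  have hlb : ∀ t ∈ Ico 0 T, x 0 * Real.exp (-(M * T)) ≤ x t := by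
    intro t ht
    have h1 := hlog t ht
    have h2 : Real.log (x 0) - M * T ≤ Real.log (x t) := by
      have : |Real.log (x t) - Real.log (x 0)| ≤ M * T := by
        calc |Real.log (x t) - Real.log (x 0)| ≤ M * ‖t - 0‖ := h1
          _ = M * t := by rw [sub_zero, Real.norm_eq_abs, abs_of_nonneg ht.1]
          _ ≤ M * T := by nlinarith [ht.2.le]
      linarith [abs_le.mp this |>.1]
    calc x 0 * Real.exp (-(M * T)) = Real.exp (Real.log (x 0) - M * T) := by
          rw [Real.exp_sub, Real.exp_log hx0, Real.exp_neg]; ring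
      _ ≤ Real.exp (Real.log (x t)) := Real.exp_le_exp.mpr h2
      _ = x t := Real.exp_log (hxpos' t ht)
  have hne : (nhdsWithin T (Ico 0 T)).NeBot := by
    rw [← mem_closure_iff_nhdsWithin_neBot, closure_Ico hTpos.ne]
    exact ⟨hT0, le_rfl⟩
  have hlim : Tendsto x (nhdsWithin T (Ico 0 T)) (nhds (x T)) :=
    ((hx T hT0).continuousAt).continuousWithinAt
  have : x 0 * Real.exp (-(M * T)) ≤ x T :=
    ge_of_tendsto hlim (eventually_nhdsWithin_of_forall hlb)
  rw [hxT] at this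
  nlinarith [Real.exp_pos (-(M * T))]

section Fsec
variable {f : ℝ → ℝ} {c xs : ℝ}

private lemma phi_cont (hf : ContinuousOn f (Set.Ioi 0)) :
    ContinuousOn (fun s => (c - f s)/s) (Set.Ioi (0:ℝ)) :=
  (continuousOn_const.sub hf).div continuousOn_id (fun s hs => ne_of_gt hs)

private lemma phi_int (hf : ContinuousOn f (Set.Ioi 0)) {a b : ℝ} (ha : 0 < a) (hb : 0 < b) :
    IntervalIntegrable (fun s => (c - f s)/s) MeasureTheory.volume a b := by
  apply ContinuousOn.intervalIntegrable
  apply (phi_cont hf).mono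
  intro s hs
  exact lt_of_lt_of_le (lt_min ha hb) hs.1

private lemma F_hasDerivAt (hxs : 0 < xs) (hf : ContinuousOn f (Set.Ioi 0)) :
    ∀ y ∈ Set.Ioi (0:ℝ),
      HasDerivAt (fun y => ∫ s in xs..y, (c - f s)/s) ((c - f y)/y) y := by
  intro y hy
  exact intervalIntegral.integral_hasDerivAt_right (phi_int hf hxs hy)
    ((phi_cont hf).stronglyMeasurableAtFilter isOpen_Ioi y hy)
    ((phi_cont hf).continuousAt (isOpen_Ioi.mem_nhds hy))

private lemma F_lb_zero (hf : ContinuousOn f (Set.Ioi 0)) {x₁ : ℝ}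
    (hx₁ : 0 < x₁) (hxs : 0 < xs)
    (h1 : ∀ s ∈ Ioc (0:ℝ) x₁, c + 1 ≤ f s)
    (hFx₁ : 0 ≤ ∫ s in xs..x₁, (c - f s)/s) :
    ∀ y ∈ Ioc (0:ℝ) x₁,
      Real.log x₁ - Real.log y ≤ ∫ s in xs..y, (c - f s)/s := by
  intro y hy
  have hsplit : (∫ s in xs..x₁, (c - f s)/s) + (∫ s in x₁..y, (c - f s)/s)
      = ∫ s in xs..y, (c - f s)/s :=
    intervalIntegral.integral_add_adjacent_intervals (phi_int hf hxs hx₁) (phi_int hf hx₁ hy.1)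
  have hsym : (∫ s in x₁..y, (c - f s)/s) = -(∫ s in y..x₁, (c - f s)/s) :=
    intervalIntegral.integral_symm y x₁
  have hmono : (∫ s in y..x₁, (c - f s)/s) ≤ ∫ s in y..x₁, -(1/s) := by
    apply intervalIntegral.integral_mono_on hy.2 (phi_int hf hy.1 hx₁)
    · apply ContinuousOn.intervalIntegrable
      apply ((continuousOn_const (c := (1:ℝ))).div continuousOn_id
        (fun s hs => ne_of_gt hs)).neg.mono
      intro s hs
      simp only [uIcc_of_le hy.2] at hs
      exact lt_of_lt_of_le hy.1 hs.1
    · intro s hs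
      have hs0 : 0 < s := lt_of_lt_of_le hy.1 hs.1
      rw [div_le_iff₀ hs0]
      have := h1 s ⟨hs0, hs.2⟩
      field_simp
      nlinarith
  have hval : (∫ s in y..x₁, -(1/s)) = -(Real.log x₁ - Real.log y) := by
    rw [intervalIntegral.integral_neg, integral_one_div_of_pos hy.1 hx₁,
      Real.log_div (ne_of_gt hx₁) (ne_of_gt hy.1)]
  rw [← hsplit, hsym]
  rw [hval] at hmono
  linarith

private lemma F_lb_inf (hf : ContinuousOn f (Set.Ioi 0)) {x₂ : ℝ}
    (hx₂ : 0 < x₂) (hxs : 0 < xs)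
    (h2 : ∀ s, x₂ ≤ s → f s ≤ c - 1)
    (hFx₂ : 0 ≤ ∫ s in xs..x₂, (c - f s)/s) :
    ∀ y, x₂ ≤ y →
      Real.log y - Real.log x₂ ≤ ∫ s in xs..y, (c - f s)/s := by
  intro y hy
  have hy0 : 0 < y := lt_of_lt_of_le hx₂ hy
  have hsplit : (∫ s in xs..x₂, (c - f s)/s) + (∫ s in x₂..y, (c - f s)/s)
      = ∫ s in xs..y, (c - f s)/s :=
    intervalIntegral.integral_add_adjacent_intervals (phi_int hf hxs hx₂) (phi_int hf hx₂ hy0)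
  have hmono : (∫ s in x₂..y, 1/s) ≤ ∫ s in x₂..y, (c - f s)/s := by
    refine intervalIntegral.integral_mono_on hy ?_ (phi_int hf hx₂ hy0) ?_
    · apply ContinuousOn.intervalIntegrable
      apply ((continuousOn_const (c := (1:ℝ))).div continuousOn_id
        (fun s hs => ne_of_gt hs)).mono
      intro s hs
      simp only [uIcc_of_le hy] at hs
      exact lt_of_lt_of_le hx₂ hs.1
    · intro s hs
      have hs0 : 0 < s := lt_of_lt_of_le hx₂ hs.1
      rw [div_le_div_iff_of_pos_right hs0]
      have := h2 s hs.1
      linarith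
  have hval : (∫ s in x₂..y, 1/s) = Real.log y - Real.log x₂ := by
    rw [integral_one_div_of_pos hx₂ hy0, Real.log_div (ne_of_gt hy0) (ne_of_gt hx₂)]
  rw [← hsplit]
  rw [hval] at hmono
  linarith

end Fsec

set_option maxHeartbeats 2000000 in
theorem stmt_13 (μ₀ : ℝ) (xs : ℝ) (hxs : 0 < xs) (f g : ℝ → ℝ)
    (hf : ContinuousOn f (Set.Ioi 0)) (hfanti : StrictAntiOn f (Set.Ioi 0))
    (hf0 : Filter.Tendsto f (nhdsWithin 0 (Set.Ioi 0)) Filter.atTop)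
    (hfinf : Filter.Tendsto f Filter.atTop Filter.atBot)
    (hg : Continuous g) (hgmono : StrictMono g)
    (hcomp : f xs = g μ₀)
    (x μ : ℝ → ℝ) (hx0 : 0 < x 0)
    (hx : ∀ t ≥ (0:ℝ), HasDerivAt x ((μ t - μ₀) * x t) t)
    (hμ : ∀ t ≥ (0:ℝ), HasDerivAt μ (f (x t) - g (μ t)) t) :
    (∀ t ≥ (0:ℝ), 0 < x t) ∧
    Filter.Tendsto x Filter.atTop (nhds xs) ∧
    Filter.Tendsto μ Filter.atTop (nhds μ₀) := by
  have hxs' : xs ∈ Set.Ioi (0:ℝ) := hxs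
  obtain ⟨c, hcdef⟩ : ∃ c : ℝ, c = g μ₀ := ⟨_, rfl⟩
  have hfc : f xs = c := by rw [hcdef]; exact hcomp
  obtain ⟨F, hFdef⟩ : ∃ F : ℝ → ℝ, F = fun y => ∫ s in xs..y, (c - f s)/s := ⟨_, rfl⟩
  have hF' : ∀ y ∈ Set.Ioi (0:ℝ), HasDerivAt F ((c - f y)/y) y := by
    rw [hFdef]; exact F_hasDerivAt hxs hf
  have hFxs : F xs = 0 := by rw [hFdef]; exact intervalIntegral.integral_same
  have hpos : ∀ t ≥ (0:ℝ), 0 < x t :=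
    xpos_aux μ₀ x μ hx0 hx (fun t ht => (hμ t ht).continuousAt)
  -- strict monotonicity of F on both sides of xs
  have hFanti : StrictAntiOn F (Ioc 0 xs) := by
    apply strictAntiOn_of_hasDerivAt' (convex_Ioc 0 xs) (fun y hy => hF' y hy.1)
    intro y hy
    rw [interior_Ioc] at hy
    have : c < f y := hfc ▸ hfanti hy.1 hxs' hy.2
    exact div_neg_of_neg_of_pos (by linarith) hy.1
  have hFmono : StrictMonoOn F (Ici xs) := by
    apply strictMonoOn_of_hasDerivAt' (convex_Ici xs)
      (fun y hy => hF' y (lt_of_lt_of_le hxs hy))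
    intro y hy
    rw [interior_Ici] at hy
    have : f y < c := hfc ▸ hfanti hxs' (mem_Ioi.mpr (lt_trans hxs hy)) hy
    exact div_pos (by linarith) (lt_trans hxs hy)
  have hFnonneg : ∀ y, 0 < y → 0 ≤ F y := by
    intro y hy
    rcases lt_trichotomy y xs with h | h | h
    · have := hFanti ⟨hy, h.le⟩ ⟨hxs, le_rfl⟩ h
      rw [hFxs] at this; linarith
    · rw [h, hFxs]
    · have := hFmono self_mem_Ici (mem_Ici.mpr h.le) h
      rw [hFxs] at this; linarith
  -- the Lyapunov function V
  obtain ⟨V, hVdef⟩ : ∃ V : ℝ → ℝ, V = fun t => F (x t) + (μ t - μ₀)^2/2 := ⟨_, rfl⟩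
  have hVeq : ∀ t, V t = F (x t) + (μ t - μ₀)^2/2 := fun t => by rw [hVdef]
  have hV' : ∀ t ∈ Ici (0:ℝ), HasDerivAt V (-((μ t - μ₀) * (g (μ t) - c))) t := by
    intro t ht
    have hxt := hpos t ht
    have h1 := (hF' (x t) hxt).comp t (hx t ht)
    have h3 := (hμ t ht).sub_const μ₀
    have h2 := (h3.pow 2).div_const 2
    have h4 := h1.add h2
    rw [hVdef]
    refine h4.congr_deriv ?_
    field_simp
    ring
  have hVanti : AntitoneOn V (Ici 0) := by
    apply antiOn_of_hasDerivAt (convex_Ici 0) hV'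
    intro t ht
    rcases le_total μ₀ (μ t) with h | h
    · have h2 : c ≤ g (μ t) := by rw [hcdef]; exact hgmono.le_iff_le.mpr h
      nlinarith
    · have h2 : g (μ t) ≤ c := by rw [hcdef]; exact hgmono.le_iff_le.mpr h
      nlinarith
  have hVnonneg : ∀ t ≥ (0:ℝ), 0 ≤ V t := by
    intro t ht
    rw [hVeq t]
    exact add_nonneg (hFnonneg _ (hpos t ht)) (by positivity)
  have hVle : ∀ t ≥ (0:ℝ), V t ≤ V 0 := fun t ht => hVanti self_mem_Ici ht ht
  have hB0 : 0 ≤ V 0 := hVnonneg 0 le_rfl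
  have hFle : ∀ t ≥ (0:ℝ), F (x t) ≤ V 0 := by
    intro t ht
    have h1 := hVle t ht
    rw [hVeq t] at h1
    nlinarith [sq_nonneg (μ t - μ₀)]
  have hsqle : ∀ t ≥ (0:ℝ), (μ t - μ₀)^2 ≤ 2 * V 0 := by
    intro t ht
    have h1 := hVle t ht
    rw [hVeq t] at h1
    have h2 := hFnonneg _ (hpos t ht)
    nlinarith
  obtain ⟨r, hrdef⟩ : ∃ r : ℝ, r = Real.sqrt (2 * V 0) := ⟨_, rfl⟩
  have hμbd : ∀ t ≥ (0:ℝ), |μ t - μ₀| ≤ r := by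
    intro t ht
    rw [hrdef, ← Real.sqrt_sq_eq_abs]
    exact Real.sqrt_le_sqrt (hsqle t ht)
  have hμK : ∀ t ≥ (0:ℝ), μ t ∈ Icc (μ₀ - r) (μ₀ + r) := by
    intro t ht
    have h := abs_le.mp (hμbd t ht)
    exact ⟨by linarith [h.1], by linarith [h.2]⟩
  -- extraction of x₁ (small) and x₂ (large)
  obtain ⟨x₁, hx₁0, hx₁xs, hx₁f⟩ :
      ∃ x₁, 0 < x₁ ∧ x₁ ≤ xs ∧ ∀ s ∈ Ioc (0:ℝ) x₁, c + 1 ≤ f s := by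
    have hev : ∀ᶠ s in nhdsWithin 0 (Ioi 0), c + 1 ≤ f s :=
      hf0.eventually (eventually_ge_atTop (c+1))
    rw [eventually_nhdsWithin_iff, Metric.eventually_nhds_iff] at hev
    obtain ⟨δ, hδ, hδf⟩ := hev
    refine ⟨min (δ/2) xs, lt_min (by linarith) hxs, min_le_right _ _, ?_⟩
    intro s hs
    refine hδf ?_ hs.1
    rw [Real.dist_eq, sub_zero, abs_of_pos hs.1]
    exact lt_of_le_of_lt hs.2 (lt_of_le_of_lt (min_le_left _ _) (by linarith))
  obtain ⟨x₂, hx₂0, hxsx₂, hx₂f⟩ :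
      ∃ x₂, 0 < x₂ ∧ xs ≤ x₂ ∧ ∀ s, x₂ ≤ s → f s ≤ c - 1 := by
    have hev : ∀ᶠ s in atTop, f s ≤ c - 1 := hfinf.eventually (eventually_le_atBot (c-1))
    obtain ⟨N, hN⟩ := eventually_atTop.mp hev
    exact ⟨max N xs, lt_of_lt_of_le hxs (le_max_right _ _), le_max_right _ _,
      fun s hs => hN s (le_trans (le_max_left _ _) hs)⟩
  have hFlbz : ∀ y ∈ Ioc (0:ℝ) x₁, Real.log x₁ - Real.log y ≤ F y := by
    have h0 : 0 ≤ F x₁ := hFnonneg x₁ hx₁0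
    rw [hFdef] at h0 ⊢
    exact F_lb_zero hf hx₁0 hxs hx₁f h0
  have hFlbi : ∀ y, x₂ ≤ y → Real.log y - Real.log x₂ ≤ F y := by
    have h0 : 0 ≤ F x₂ := hFnonneg x₂ hx₂0
    rw [hFdef] at h0 ⊢
    exact F_lb_inf hf hx₂0 hxs hx₂f h0
  -- compact confinement of x
  obtain ⟨a₀, ha₀def⟩ : ∃ a₀ : ℝ, a₀ = x₁ * Real.exp (-(V 0)) := ⟨_, rfl⟩
  obtain ⟨b₀, hb₀def⟩ : ∃ b₀ : ℝ, b₀ = x₂ * Real.exp (V 0) := ⟨_, rfl⟩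
  have ha₀0 : 0 < a₀ := by rw [ha₀def]; positivity
  have hb₀0 : 0 < b₀ := by rw [hb₀def]; positivity
  have ha₀x₁ : a₀ ≤ x₁ := by
    rw [ha₀def]
    nlinarith [Real.exp_le_one_iff.mpr (neg_nonpos.mpr hB0), hx₁0]
  have hx₂b₀ : x₂ ≤ b₀ := by
    rw [hb₀def]
    nlinarith [Real.one_le_exp hB0, hx₂0]
  have hxlb : ∀ t ≥ (0:ℝ), a₀ ≤ x t := by
    intro t ht
    rcases le_or_gt (x t) x₁ with h | h
    · have h1 := hFlbz (x t) ⟨hpos t ht, h⟩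
      have h2 : Real.log x₁ - Real.log (x t) ≤ V 0 := le_trans h1 (hFle t ht)
      have h3 : Real.log a₀ ≤ Real.log (x t) := by
        rw [ha₀def, Real.log_mul (ne_of_gt hx₁0) (Real.exp_ne_zero _), Real.log_exp]
        linarith
      exact (Real.log_le_log_iff ha₀0 (hpos t ht)).mp h3
    · linarith
  have hxub : ∀ t ≥ (0:ℝ), x t ≤ b₀ := by
    intro t ht
    rcases le_or_gt x₂ (x t) with h | h
    · have h1 := hFlbi (x t) h
      have h2 : Real.log (x t) - Real.log x₂ ≤ V 0 := le_trans h1 (hFle t ht)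
      have h3 : Real.log (x t) ≤ Real.log b₀ := by
        rw [hb₀def, Real.log_mul (ne_of_gt hx₂0) (Real.exp_ne_zero _), Real.log_exp]
        linarith
      exact (Real.log_le_log_iff (hpos t ht) hb₀0).mp h3
    · linarith
  -- Lipschitz bound for μ
  obtain ⟨Mf, hMf⟩ : ∃ Mf, ∀ y ∈ Icc a₀ b₀, ‖f y‖ ≤ Mf :=
    IsCompact.exists_bound_of_continuousOn isCompact_Icc
      (hf.mono (fun y hy => lt_of_lt_of_le ha₀0 hy.1))
  obtain ⟨Mg, hMg⟩ : ∃ Mg, ∀ m ∈ Icc (μ₀ - r) (μ₀ + r), ‖g m‖ ≤ Mg :=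
    IsCompact.exists_bound_of_continuousOn isCompact_Icc hg.continuousOn
  obtain ⟨M, hMdef⟩ : ∃ M : ℝ, M = max (Mf + Mg) 1 := ⟨_, rfl⟩
  have hM1 : (1:ℝ) ≤ M := by rw [hMdef]; exact le_max_right _ _
  have hμ'bd : ∀ t ≥ (0:ℝ), ‖f (x t) - g (μ t)‖ ≤ M := by
    intro t ht
    calc ‖f (x t) - g (μ t)‖ ≤ ‖f (x t)‖ + ‖g (μ t)‖ := norm_sub_le _ _
      _ ≤ Mf + Mg := add_le_add (hMf _ ⟨hxlb t ht, hxub t ht⟩) (hMg _ (hμK t ht))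
      _ ≤ M := by rw [hMdef]; exact le_max_left _ _
  have hμlip : ∀ s ≥ (0:ℝ), ∀ t ≥ (0:ℝ), |μ s - μ t| ≤ M * |s - t| := by
    intro s hs t ht
    have := Convex.norm_image_sub_le_of_norm_hasDerivWithin_le
      (f := μ) (f' := fun u => f (x u) - g (μ u)) (s := Ici (0:ℝ))
      (fun u hu => (hμ u hu).hasDerivWithinAt) (fun u hu => hμ'bd u hu)
      (convex_Ici 0) ht hs
    simpa [Real.norm_eq_abs] using this
  -- convergence of μ to μ₀
  have hμlim : Tendsto μ atTop (nhds μ₀) := by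
    by_contra hnot
    rw [Metric.tendsto_atTop] at hnot
    push_neg at hnot
    obtain ⟨ε, hε, hfreq⟩ := hnot
    obtain ⟨S, hSdef⟩ : ∃ S : Set ℝ, S = Icc (μ₀ - r) (μ₀ + r) ∩ {m | ε/2 ≤ |m - μ₀|} :=
      ⟨_, rfl⟩
    have hScpt : IsCompact S := by
      rw [hSdef]
      exact isCompact_Icc.inter_right
        (isClosed_le continuous_const ((continuous_id.sub continuous_const).abs))
    have hSne : S.Nonempty := by
      obtain ⟨t₀, ht₀, hd⟩ := hfreq 0
      rw [Real.dist_eq] at hd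
      exact ⟨μ t₀, by rw [hSdef]; exact ⟨hμK t₀ ht₀, by simp only [mem_setOf_eq]; linarith⟩⟩
    obtain ⟨m₀, hm₀S, hm₀min⟩ := hScpt.exists_isMinOn hSne
      (((continuous_id.sub continuous_const).mul (hg.sub continuous_const)).continuousOn)
    obtain ⟨η, hηdef⟩ : ∃ η : ℝ, η = (m₀ - μ₀) * (g m₀ - c) := ⟨_, rfl⟩
    have hm₀S' := hm₀S
    rw [hSdef] at hm₀S'
    have hm₀ne : m₀ ≠ μ₀ := by
      intro hh
      have := hm₀S'.2
      rw [hh] at this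
      simp only [mem_setOf_eq, sub_self, abs_zero] at this
      linarith
    have hη : 0 < η := by
      rw [hηdef, hcdef]
      rcases lt_or_gt_of_ne hm₀ne with h | h
      · exact mul_pos_of_neg_of_neg (by linarith) (sub_neg.mpr (hgmono h))
      · exact mul_pos (by linarith) (sub_pos.mpr (hgmono h))
    have hηmin : ∀ m ∈ S, η ≤ (m - μ₀) * (g m - c) := by
      intro m hm
      rw [hηdef]
      exact hm₀min hm
    obtain ⟨δ, hδdef⟩ : ∃ δ : ℝ, δ = ε / (2*M) := ⟨_, rfl⟩
    have hδ0 : 0 < δ := by rw [hδdef]; exact div_pos hε (by linarith)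
    have hMδ : M * δ = ε/2 := by
      rw [hδdef]
      field_simp
    have key : ∀ t ≥ (0:ℝ), ε ≤ |μ t - μ₀| → V (t + δ) ≤ V t - η * δ := by
      intro t ht hdist
      have hhS : ∀ u ∈ Icc t (t+δ), η ≤ (μ u - μ₀) * (g (μ u) - c) := by
        intro u hu
        have hu0 : (0:ℝ) ≤ u := le_trans ht hu.1
        refine hηmin _ ?_
        rw [hSdef]
        refine ⟨hμK u hu0, ?_⟩
        rw [mem_setOf_eq]
        have hlip := hμlip u hu0 t ht
        have habs : |u - t| ≤ δ := by
          rw [abs_of_nonneg (by linarith [hu.1])]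
          linarith [hu.2]
        have h2 : |μ u - μ t| ≤ ε/2 := by
          rw [← hMδ]
          exact le_trans hlip (by nlinarith)
        have h3 := abs_sub_le (μ t) (μ u) μ₀
        have h4 : |μ t - μ u| = |μ u - μ t| := abs_sub_comm _ _
        linarith
      have hanti : AntitoneOn (fun u => V u + η * u) (Icc t (t+δ)) := by
        apply antiOn_of_hasDerivAt (convex_Icc _ _)
          (fun u hu => (hV' u (le_trans ht hu.1)).add ((hasDerivAt_id u).const_mul η))
        intro u hu
        have := hhS u hu
        simp only [mul_one]
        linarith
      have h5 := hanti (left_mem_Icc.mpr (by linarith)) (right_mem_Icc.mpr (by linarith))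
        (by linarith)
      simp only [] at h5
      nlinarith
    have hiter : ∀ n : ℕ, ∃ t, 0 ≤ t ∧ V t ≤ V 0 - n * (η * δ) := by
      intro n
      induction n with
      | zero => exact ⟨0, le_rfl, by simp⟩
      | succ n ih =>
        obtain ⟨t, ht, hVt⟩ := ih
        obtain ⟨t', ht', hd⟩ := hfreq (max t 0)
        have ht'0 : (0:ℝ) ≤ t' := le_trans (le_max_right _ _) ht'
        have htt' : t ≤ t' := le_trans (le_max_left _ _) ht'
        refine ⟨t' + δ, by linarith, ?_⟩
        have h1 := key t' ht'0 (by rw [Real.dist_eq] at hd; exact hd)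
        have h2 : V t' ≤ V t := hVanti ht ht'0 htt'
        have h3 : ((n:ℝ) + 1) * (η * δ) = (n:ℝ) * (η * δ) + η * δ := by ring
        push_cast
        linarith
    obtain ⟨n, hn⟩ := exists_nat_gt (V 0 / (η * δ))
    obtain ⟨t, ht, hVt⟩ := hiter n
    have hηδ : 0 < η * δ := mul_pos hη hδ0
    rw [div_lt_iff₀ hηδ] at hn
    have := hVnonneg t ht
    linarith
  have hglim : Tendsto (fun t => g (μ t)) atTop (nhds c) := by
    rw [hcdef]
    exact (hg.tendsto μ₀).comp hμlim
  -- the limit of V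
  have hWanti : Antitone (fun t => V (max t 0)) := by
    intro s t hst
    exact hVanti (le_max_right s 0) (le_max_right t 0) (max_le_max hst le_rfl)
  have hWbdd : BddBelow (Set.range fun t => V (max t 0)) :=
    ⟨0, by rintro _ ⟨t, rfl⟩; exact hVnonneg _ (le_max_right t 0)⟩
  obtain ⟨L, hLdef⟩ : ∃ L : ℝ, L = ⨅ t : ℝ, V (max t 0) := ⟨_, rfl⟩
  have hVlim : Tendsto V atTop (nhds L) := by
    rw [hLdef]
    apply (tendsto_atTop_ciInf hWanti hWbdd).congr'
    filter_upwards [eventually_ge_atTop (0:ℝ)] with t ht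
    rw [max_eq_left ht]
  have hL0 : 0 ≤ L := by
    rw [hLdef]
    exact le_ciInf fun t => hVnonneg _ (le_max_right t 0)
  have hsqlim : Tendsto (fun t => (μ t - μ₀)^2/2) atTop (nhds 0) := by
    have h1 : Tendsto (fun t => μ t - μ₀) atTop (nhds 0) := by
      simpa using hμlim.sub_const μ₀
    have h2 := (h1.pow 2).div_const 2
    simpa using h2
  have hFxlim : Tendsto (fun t => F (x t)) atTop (nhds L) := by
    have h1 := hVlim.sub hsqlim
    rw [sub_zero] at h1
    apply h1.congr
    intro t
    rw [hVeq t]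
    ring
  -- L must be 0
  have hLzero : L = 0 := by
    by_contra hL
    have hLpos : 0 < L := lt_of_le_of_ne hL0 (Ne.symm hL)
    have hFcont : ContinuousAt F xs := (hF' xs hxs').continuousAt
    have hev : ∀ᶠ y in nhds xs, F y < L/2 := by
      apply hFcont.eventually_lt_const
      rw [hFxs]
      linarith
    rw [Metric.eventually_nhds_iff] at hev
    obtain ⟨ε₀, hε₀, hband⟩ := hev
    obtain ⟨ε', hε'def⟩ : ∃ e : ℝ, e = min (ε₀/2) (xs/2) := ⟨_, rfl⟩
    have hε'0 : 0 < ε' := by rw [hε'def]; exact lt_min (by linarith) (by linarith)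
    have hε'xs : ε' < xs := by
      rw [hε'def]
      exact lt_of_le_of_lt (min_le_right _ _) (by linarith)
    have hband' : ∀ y, |y - xs| ≤ ε' → F y < L/2 := by
      intro y hy
      apply hband
      rw [Real.dist_eq]
      refine lt_of_le_of_lt hy ?_
      rw [hε'def]
      exact lt_of_le_of_lt (min_le_left _ _) (by linarith)
    have hevF : ∀ᶠ t in atTop, L/2 < F (x t) := hFxlim.eventually_const_lt (by linarith)
    obtain ⟨T₀', hT₀'⟩ := eventually_atTop.mp hevF
    obtain ⟨T₀, hT₀def⟩ : ∃ T : ℝ, T = max T₀' 0 := ⟨_, rfl⟩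
    have hT₀0 : (0:ℝ) ≤ T₀ := by rw [hT₀def]; exact le_max_right _ _
    have hfar : ∀ t ≥ T₀, ε' < |x t - xs| := by
      intro t ht
      by_contra hle
      push_neg at hle
      have h1 := hband' _ hle
      have h2 := hT₀' t (le_trans (by rw [hT₀def]; exact le_max_left _ _) ht)
      linarith
    have hside : ∀ t ≥ T₀, x t < xs - ε' ∨ xs + ε' < x t := by
      intro t ht
      rcases lt_abs.mp (hfar t ht) with h | h
      · right; linarith
      · left; linarith
    have hcases : (∀ t ≥ T₀, x t < xs - ε') ∨ (∀ t ≥ T₀, xs + ε' < x t) := by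
      rcases hside T₀ le_rfl with h0 | h0
      · left
        intro t ht
        rcases hside t ht with h | h
        · exact h
        · exfalso
          have hcont : ContinuousOn x (Icc T₀ t) := fun u hu =>
            ((hx u (le_trans hT₀0 hu.1)).continuousAt).continuousWithinAt
          have hxsmem : xs ∈ x '' Icc T₀ t := by
            apply intermediate_value_Icc ht hcont
            exact ⟨by linarith, by linarith⟩
          obtain ⟨u, hu, hxu⟩ := hxsmem
          have := hfar u hu.1
          rw [hxu, sub_self, abs_zero] at this
          linarith
      · right
        intro t ht
        rcases hside t ht with h | h
        · exfalso
          have hcont : ContinuousOn x (Icc T₀ t) := fun u hu =>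
            ((hx u (le_trans hT₀0 hu.1)).continuousAt).continuousWithinAt
          have hxsmem : xs ∈ x '' Icc T₀ t := by
            apply intermediate_value_Icc' ht hcont
            exact ⟨by linarith, by linarith⟩
          obtain ⟨u, hu, hxu⟩ := hxsmem
          have := hfar u hu.1
          rw [hxu, sub_self, abs_zero] at this
          linarith
        · exact h
      -- end hcases
    rcases hcases with hcase | hcase
    · -- x below : μ must blow up
      have hρf : c < f (xs - ε') := by
        rw [← hfc]
        exact hfanti (mem_Ioi.mpr (by linarith)) hxs' (by linarith)
      obtain ⟨ρ, hρdef⟩ : ∃ ρ : ℝ, ρ = (f (xs - ε') - c)/2 := ⟨_, rfl⟩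
      have hρ0 : 0 < ρ := by rw [hρdef]; linarith
      have hevg : ∀ᶠ t in atTop, g (μ t) < c + ρ := hglim.eventually_lt_const (by linarith)
      obtain ⟨T₁', hT₁'⟩ := eventually_atTop.mp hevg
      obtain ⟨T₁, hT₁def⟩ : ∃ T : ℝ, T = max T₁' T₀ := ⟨_, rfl⟩
      have hT₁T₀ : T₀ ≤ T₁ := by rw [hT₁def]; exact le_max_right _ _
      have hT₁0 : (0:ℝ) ≤ T₁ := le_trans hT₀0 hT₁T₀
      have hder : ∀ t ≥ T₁, ρ ≤ f (x t) - g (μ t) := by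
        intro t ht
        have ht0 : (0:ℝ) ≤ t := le_trans hT₁0 ht
        have h1 : f (xs - ε') < f (x t) :=
          hfanti (mem_Ioi.mpr (hpos t ht0)) (mem_Ioi.mpr (by linarith))
            (hcase t (le_trans hT₁T₀ ht))
        have h2 : g (μ t) < c + ρ := hT₁' t (le_trans (by rw [hT₁def]; exact le_max_left _ _) ht)
        rw [hρdef] at hρ0 ⊢
        linarith
      have hmono2 : MonotoneOn (fun t => μ t - ρ * t) (Ici T₁) := by
        apply monoOn_of_hasDerivAt (convex_Ici T₁)
          (fun u hu => ((hμ u (le_trans hT₁0 hu)).sub ((hasDerivAt_id u).const_mul ρ)))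
        intro u hu
        have := hder u hu
        simp only [mul_one]
        linarith
      obtain ⟨tb, htbdef⟩ : ∃ tb : ℝ, tb = T₁ + (μ₀ + r + 1 - μ T₁)/ρ := ⟨_, rfl⟩
      have h01 : μ T₁ ≤ μ₀ + r := by
        have := abs_le.mp (hμbd T₁ hT₁0)
        linarith [this.2]
      have htb : T₁ ≤ tb := by
        rw [htbdef]
        have : 0 ≤ (μ₀ + r + 1 - μ T₁)/ρ := div_nonneg (by linarith) hρ0.le
        linarith
      have hmm := hmono2 self_mem_Ici (mem_Ici.mpr htb) htb
      simp only [] at hmm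
      have h3 : ρ * (tb - T₁) = μ₀ + r + 1 - μ T₁ := by
        rw [htbdef]
        field_simp
        ring
      have h4 := (abs_le.mp (hμbd tb (le_trans hT₁0 htb))).2
      nlinarith
    · -- x above : μ must blow down
      have hρf : f (xs + ε') < c := by
        rw [← hfc]
        exact hfanti hxs' (mem_Ioi.mpr (by linarith)) (by linarith)
      obtain ⟨ρ, hρdef⟩ : ∃ ρ : ℝ, ρ = (c - f (xs + ε'))/2 := ⟨_, rfl⟩
      have hρ0 : 0 < ρ := by rw [hρdef]; linarith
      have hevg : ∀ᶠ t in atTop, c - ρ < g (μ t) := hglim.eventually_const_lt (by linarith)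
      obtain ⟨T₁', hT₁'⟩ := eventually_atTop.mp hevg
      obtain ⟨T₁, hT₁def⟩ : ∃ T : ℝ, T = max T₁' T₀ := ⟨_, rfl⟩
      have hT₁T₀ : T₀ ≤ T₁ := by rw [hT₁def]; exact le_max_right _ _
      have hT₁0 : (0:ℝ) ≤ T₁ := le_trans hT₀0 hT₁T₀
      have hder : ∀ t ≥ T₁, f (x t) - g (μ t) ≤ -ρ := by
        intro t ht
        have ht0 : (0:ℝ) ≤ t := le_trans hT₁0 ht
        have h1 : f (x t) < f (xs + ε') :=
          hfanti (mem_Ioi.mpr (by linarith)) (mem_Ioi.mpr (lt_trans hxs (by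
            linarith [hcase t (le_trans hT₁T₀ ht)])))
            (hcase t (le_trans hT₁T₀ ht))
        have h2 : c - ρ < g (μ t) := hT₁' t (le_trans (by rw [hT₁def]; exact le_max_left _ _) ht)
        rw [hρdef] at hρ0 ⊢
        linarith
      have hmono2 : AntitoneOn (fun t => μ t + ρ * t) (Ici T₁) := by
        apply antiOn_of_hasDerivAt (convex_Ici T₁)
          (fun u hu => ((hμ u (le_trans hT₁0 hu)).add ((hasDerivAt_id u).const_mul ρ)))
        intro u hu
        have := hder u hu
        simp only [mul_one]
        linarith
      obtain ⟨tb, htbdef⟩ : ∃ tb : ℝ, tb = T₁ + (μ T₁ - (μ₀ - r) + 1)/ρ := ⟨_, rfl⟩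
      have h01 : μ₀ - r ≤ μ T₁ := by
        have := abs_le.mp (hμbd T₁ hT₁0)
        linarith [this.1]
      have htb : T₁ ≤ tb := by
        rw [htbdef]
        have : 0 ≤ (μ T₁ - (μ₀ - r) + 1)/ρ := div_nonneg (by linarith) hρ0.le
        linarith
      have hmm := hmono2 self_mem_Ici (mem_Ici.mpr htb) htb
      simp only [] at hmm
      have h3 : ρ * (tb - T₁) = μ T₁ - (μ₀ - r) + 1 := by
        rw [htbdef]
        field_simp
        ring
      have h4 := (abs_le.mp (hμbd tb (le_trans hT₁0 htb))).1
      nlinarith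
  -- x converges to xs
  have hFx0 : Tendsto (fun t => F (x t)) atTop (nhds 0) := hLzero ▸ hFxlim
  have hxlim : Tendsto x atTop (nhds xs) := by
    rw [Metric.tendsto_atTop]
    intro ε hε
    obtain ⟨ε', hε'def⟩ : ∃ e : ℝ, e = min (ε/2) (xs/2) := ⟨_, rfl⟩
    have hε'0 : 0 < ε' := by rw [hε'def]; exact lt_min (by linarith) (by linarith)
    have hε'xs : ε' < xs := by
      rw [hε'def]
      exact lt_of_le_of_lt (min_le_right _ _) (by linarith)
    have hε'ε : ε' < ε := by
      rw [hε'def]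
      exact lt_of_le_of_lt (min_le_left _ _) (by linarith)
    have hFa : 0 < F (xs - ε') := by
      have := hFanti (⟨by linarith, by linarith⟩ : xs - ε' ∈ Ioc 0 xs)
        ⟨hxs, le_rfl⟩ (by linarith)
      rw [hFxs] at this
      exact this
    have hFb : 0 < F (xs + ε') := by
      have h := hFmono (self_mem_Ici (a := xs))
        (mem_Ici.mpr (by linarith : xs ≤ xs + ε')) (by linarith : xs < xs + ε')
      rw [hFxs] at h
      exact h
    have hev : ∀ᶠ t in atTop, F (x t) < min (F (xs - ε')) (F (xs + ε')) :=
      hFx0.eventually_lt_const (lt_min hFa hFb)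
    obtain ⟨N', hN'⟩ := eventually_atTop.mp hev
    refine ⟨max N' 0, fun t ht => ?_⟩
    have ht0 : (0:ℝ) ≤ t := le_trans (le_max_right _ _) ht
    have hFxt := hN' t (le_trans (le_max_left _ _) ht)
    rw [Real.dist_eq]
    by_contra hcon
    push_neg at hcon
    rcases le_or_gt xs (x t) with h | h
    · have h1 : xs + ε' ≤ x t := by
        rw [abs_of_nonneg (by linarith)] at hcon
        linarith
      have h2 : F (xs + ε') ≤ F (x t) :=
        hFmono.monotoneOn (mem_Ici.mpr (by linarith)) (mem_Ici.mpr (by linarith)) h1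
      have h3 : min (F (xs - ε')) (F (xs + ε')) ≤ F (x t) :=
        le_trans (min_le_right _ _) h2
      linarith
    · have hxt0 := hpos t ht0
      have h1 : x t ≤ xs - ε' := by
        rw [abs_of_neg (by linarith)] at hcon
        linarith
      have h2 : F (xs - ε') ≤ F (x t) :=
        hFanti.antitoneOn ⟨hxt0, by linarith⟩ ⟨by linarith, by linarith⟩ h1
      have h3 : min (F (xs - ε')) (F (xs + ε')) ≤ F (x t) :=
        le_trans (min_le_left _ _) h2
      linarith
  exact ⟨hpos, hxlim, hμlim⟩
end
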